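/- Let (A, τ) be a subdirectly irreducible SMMV-algebra and a ∈ A. Then there exist uniquely determined b ∈ τ(A) and c ∈ F_τ(A) such that exactly one of the following holds: (a) a = b ⊙ c and c is the greatest element with this property; or (b) a = c → b and b < c < 1. -/

import Mathlib

/-- An MV-algebra `(A, ⊕, ¬, 0)`. -/
class MV (A : Type*) extends Zero A where
  oplus : A → A → A
  mvneg : A → A
  oplus_assoc : ∀ x y z : A, oplus (oplus x y) z = oplus x (oplus y z)
  oplus_comm : ∀ x y : A, oplus x y = oplus y x
  oplus_zero : ∀ x : A, oplus x 0 = x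
  mvneg_mvneg : ∀ x : A, mvneg (mvneg x) = x
  oplus_top : ∀ x : A, oplus x (mvneg 0) = mvneg 0
  luk : ∀ x y : A, oplus (mvneg (oplus (mvneg x) y)) y = oplus (mvneg (oplus (mvneg y) x)) x

namespace MV

variable {A : Type*} [MV A]

/-- The top element `1 = ¬0`. -/
def top : A := mvneg 0
/-- `x → y := ¬x ⊕ y`. -/
def imp (x y : A) : A := oplus (mvneg x) y
/-- `x ⊙ y := ¬(¬x ⊕ ¬y)`. -/
def odot (x y : A) : A := mvneg (oplus (mvneg x) (mvneg y))
/-- `x ⊖ y := ¬(¬x ⊕ y)`. -/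
def ominus (x y : A) : A := mvneg (oplus (mvneg x) y)
/-- Lattice join `x ∨ y := (x → y) → y`. -/
def mvsup (x y : A) : A := imp (imp x y) y
/-- Lattice meet `x ∧ y := x ⊙ (x → y)`. -/
def mvinf (x y : A) : A := odot x (imp x y)
/-- The lattice order: `x ≤ y` iff `x → y = 1`. -/
def mvle (x y : A) : Prop := imp x y = top
/-- Strict order. -/
def mvlt (x y : A) : Prop := mvle x y ∧ x ≠ y

/-- `(A, τ)` is an SMV-algebra. -/
structure IsSMV (τ : A → A) : Prop where
  map_top : τ top = top
  tau_oplus : ∀ x y : A, τ (oplus x y) = oplus (τ x) (τ (ominus y (odot x y)))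
  map_neg : ∀ x : A, τ (mvneg x) = mvneg (τ x)
  tau_fix : ∀ x y : A, τ (oplus (τ x) (τ y)) = oplus (τ x) (τ y)

/-- `(A, τ)` is a state morphism MV-algebra. -/
def IsSMMV (τ : A → A) : Prop := IsSMV τ ∧ ∀ x y : A, τ (oplus x y) = oplus (τ x) (τ y)

/-- An MV-filter. -/
structure IsFilter (F : Set A) : Prop where
  top_mem : top ∈ F
  mp : ∀ a b : A, a ∈ F → imp a b ∈ F → b ∈ F

/-- A `τ`-filter: an MV-filter closed under `τ`. -/
def IsTauFilter (τ : A → A) (F : Set A) : Prop := IsFilter F ∧ ∀ a ∈ F, τ a ∈ F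

/-- Subdirect irreducibility of an SMV-algebra: there is a minimum nontrivial `τ`-filter. -/
def SubdirIrrSMV (τ : A → A) : Prop :=
  ∃ F : Set A, IsTauFilter τ F ∧ F ≠ {top} ∧
    ∀ G : Set A, IsTauFilter τ G → G ≠ {top} → F ⊆ G

/-- A filter of the subalgebra/subhoop with universe `S`. -/
def IsFilterOn (S F : Set A) : Prop :=
  F ⊆ S ∧ top ∈ F ∧ ∀ a b : A, a ∈ F → b ∈ S → imp a b ∈ F → b ∈ F

/-- Subdirect irreducibility of the subalgebra/subhoop with universe `S`:
there is a minimum nontrivial filter on `S`. -/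
def SubdirIrrOn (S : Set A) : Prop :=
  ∃ F : Set A, IsFilterOn S F ∧ F ≠ {top} ∧
    ∀ G : Set A, IsFilterOn S G → G ≠ {top} → F ⊆ G

/-- The set `F_τ(A) = {a : τ a = 1}`. -/
def tauKernel (τ : A → A) : Set A := {a : A | τ a = top}

/-- Homomorphisms of MV-algebras. -/
structure IsMVHom {A B : Type*} [MV A] [MV B] (f : A → B) : Prop where
  map_oplus : ∀ x y : A, f (oplus x y) = oplus (f x) (f y)
  map_neg : ∀ x : A, f (mvneg x) = mvneg (f x)
  map_zero : f 0 = 0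

end MV

open MV

instance MV.instProd {A B : Type*} [MV A] [MV B] : MV (A × B) where
  oplus x y := (oplus x.1 y.1, oplus x.2 y.2)
  mvneg x := (mvneg x.1, mvneg x.2)
  oplus_assoc x y z := by simp [oplus_assoc]
  oplus_comm x y := by simp [oplus_comm x.1 y.1, oplus_comm x.2 y.2]
  oplus_zero x := by simp [oplus_zero]
  mvneg_mvneg x := by simp [mvneg_mvneg]
  oplus_top x := by simp [oplus_top]
  luk x y := by simp [luk]

instance MV.instPi {I : Type*} {A : I → Type*} [∀ i, MV (A i)] : MV (∀ i, A i) where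
  oplus x y i := oplus (x i) (y i)
  mvneg x i := mvneg (x i)
  oplus_assoc x y z := by funext i; simp [oplus_assoc]
  oplus_comm x y := by funext i; exact oplus_comm _ _
  oplus_zero x := by funext i; exact oplus_zero _
  mvneg_mvneg x := by funext i; exact mvneg_mvneg _
  oplus_top x := by funext i; exact oplus_top _
  luk x y := by funext i; exact luk _ _


/-!
Applying `τ` to either form shows `b = τ a`, since `τ b = b` and `τ c = 1`. Then `c` is forced:
`c = τ a → a` in form (a) and `c = a → τ a` in form (b), and the two forms are told apart by
whether `a ≤ τ a`. So uniqueness holds in every SMMV-algebra, and existence reduces to the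
comparability of `a` and `τ a`.

That is where subdirect irreducibility enters: `u = a → τ a` and `v = τ a → a` lie in `F_τ(A)`,
and `u ∨ v = 1` by prelinearity. The filters generated by `u` and by `v` are `τ`-filters, so if
neither `u` nor `v` were `1`, both would contain the minimum nontrivial `τ`-filter, hence an
element `w ≠ 1` lying above some `uⁿ` and some `vᵐ`; but `uⁿ ∨ vᵐ = 1`.
-/

namespace MV

variable {A : Type*} [MV A]

section Order

lemma zero_oplus (x : A) : oplus 0 x = x := by rw [oplus_comm, oplus_zero]

lemma oplus_top' (x : A) : oplus x (top : A) = top := oplus_top x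

lemma top_oplus (x : A) : oplus (top : A) x = top := by rw [oplus_comm]; exact oplus_top x

lemma mvneg_top : mvneg (top : A) = 0 := mvneg_mvneg 0

lemma oplus_left_comm (x y z : A) : oplus x (oplus y z) = oplus y (oplus x z) := by
  rw [← oplus_assoc, oplus_comm x y, oplus_assoc]

lemma top_imp (x : A) : imp (top : A) x = x := by unfold imp; rw [mvneg_top, zero_oplus]

lemma imp_self (x : A) : imp x x = top := by
  have h := luk x (top : A)
  rw [oplus_top', mvneg_top, zero_oplus] at h
  exact h.symm

lemma mvneg_oplus_self (x : A) : oplus (mvneg x) x = top := imp_self x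

lemma mvle_refl (x : A) : mvle x x := imp_self x

lemma mvle_top (x : A) : mvle x top := oplus_top' (mvneg x)

lemma mvle_antisymm {x y : A} (hxy : mvle x y) (hyx : mvle y x) : x = y := by
  have h := luk x y
  unfold mvle imp at hxy hyx
  rw [hxy, hyx, mvneg_top, zero_oplus, zero_oplus] at h
  exact h.symm

lemma eq_top_of_top_le {x : A} (h : mvle top x) : x = top := mvle_antisymm (mvle_top x) h

lemma le_oplus_self (x u : A) : mvle x (oplus u x) := by
  unfold mvle imp
  rw [oplus_comm u x, ← oplus_assoc, mvneg_oplus_self, top_oplus]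

lemma oplus_ominus_of_le {x y : A} (h : mvle x y) : oplus (ominus y x) x = y := by
  have hl := luk y x
  unfold mvle imp at h
  rwa [h, mvneg_top, zero_oplus] at hl

lemma mvle_trans {x y z : A} (hxy : mvle x y) (hyz : mvle y z) : mvle x z := by
  unfold mvle imp at *
  rw [← oplus_ominus_of_le hyz, oplus_left_comm, hxy, oplus_top']

lemma oplus_mono_left {x y : A} (z : A) (h : mvle x y) : mvle (oplus x z) (oplus y z) := by
  unfold mvle imp
  rw [← oplus_ominus_of_le h, oplus_assoc (ominus y x) x z, oplus_left_comm, mvneg_oplus_self,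
    oplus_top']

lemma mvneg_le_mvneg {x y : A} (h : mvle x y) : mvle (mvneg y) (mvneg x) := by
  unfold mvle imp at *
  rwa [mvneg_mvneg, oplus_comm]

lemma imp_le_imp_right {x y : A} (z : A) (h : mvle x y) : mvle (imp y z) (imp x z) :=
  oplus_mono_left z (mvneg_le_mvneg h)

end Order

section Odot

lemma imp_odot (x y z : A) : imp (odot x y) z = imp y (imp x z) := by
  unfold imp odot
  rw [mvneg_mvneg, oplus_assoc, oplus_left_comm]

lemma odot_le_iff_le_imp {x y z : A} : mvle (odot x y) z ↔ mvle y (imp x z) := by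
  unfold mvle
  rw [imp_odot]

lemma odot_comm (x y : A) : odot x y = odot y x := by unfold odot; rw [oplus_comm]

lemma odot_assoc (x y z : A) : odot (odot x y) z = odot x (odot y z) := by
  unfold odot; rw [mvneg_mvneg, mvneg_mvneg, oplus_assoc]

lemma odot_top (x : A) : odot x top = x := by
  unfold odot; rw [mvneg_top, oplus_zero, mvneg_mvneg]

lemma top_odot (x : A) : odot top x = x := by rw [odot_comm, odot_top]

lemma odot_le_right (x y : A) : mvle (odot x y) y :=
  odot_le_iff_le_imp.mpr (le_oplus_self y (mvneg x))

lemma odot_le_left (x y : A) : mvle (odot x y) x := by rw [odot_comm]; exact odot_le_right _ _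

lemma le_imp_odot (x y : A) : mvle y (imp x (odot x y)) := odot_le_iff_le_imp.mp (mvle_refl _)

lemma odot_imp_of_le {x y : A} (h : mvle x y) : odot y (imp y x) = x := by
  have hl := luk (mvneg x) (mvneg y)
  rw [mvneg_mvneg, mvneg_mvneg] at hl
  unfold mvle imp at h
  rw [oplus_comm y (mvneg x), h, mvneg_top, zero_oplus] at hl
  show mvneg (oplus (mvneg y) (mvneg (oplus (mvneg y) x))) = x
  rw [oplus_comm (mvneg y) x, oplus_comm (mvneg y) (mvneg (oplus x (mvneg y))), hl, mvneg_mvneg]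

lemma mvneg_odot_mvneg (x y : A) : mvneg (odot x (mvneg y)) = imp x y := by
  unfold odot imp; rw [mvneg_mvneg, mvneg_mvneg]

lemma ominus_eq_odot (x y : A) : ominus x y = odot x (mvneg y) := by
  unfold ominus odot; rw [mvneg_mvneg]

end Odot

section Lattice

lemma mvsup_comm (x y : A) : mvsup x y = mvsup y x := luk x y

lemma le_mvsup_right (x y : A) : mvle y (mvsup x y) := le_oplus_self _ _

lemma le_mvsup_left (x y : A) : mvle x (mvsup x y) := by
  rw [mvsup_comm]; exact le_mvsup_right _ _

lemma mvsup_eq_left {x y : A} (h : mvle y x) : mvsup x y = x := by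
  rw [mvsup_comm]
  show imp (imp y x) x = x
  rw [show imp y x = top from h, top_imp]

lemma mvsup_le {x y z : A} (hxz : mvle x z) (hyz : mvle y z) : mvle (mvsup x y) z := by
  have h := imp_le_imp_right y (imp_le_imp_right y hxz)
  rwa [show imp (imp z y) y = z from mvsup_eq_left hyz] at h

lemma odot_mvsup_le (x y z : A) :
    mvle (odot x (mvsup y z)) (mvsup (odot x y) (odot x z)) :=
  odot_le_iff_le_imp.mpr <| mvsup_le (odot_le_iff_le_imp.mp (le_mvsup_left _ _))
    (odot_le_iff_le_imp.mp (le_mvsup_right _ _))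

lemma ominus_mvsup (x y : A) : ominus (mvsup x y) y = ominus x y := by
  have h : odot (mvneg y) (imp (mvneg y) (ominus x y)) = ominus x y :=
    odot_imp_of_le (mvneg_le_mvneg (le_oplus_self y (mvneg x)))
  rw [show imp (mvneg y) (ominus x y) = oplus y (ominus x y) by
    unfold imp; rw [mvneg_mvneg]] at h
  rw [ominus_eq_odot, odot_comm, ← h, oplus_comm]
  rfl

lemma ominus_ominus_ominus (x y : A) : ominus (ominus x y) (ominus y x) = ominus x y :=
  calc ominus (ominus x y) (ominus y x)
      = ominus (ominus (mvsup x y) y) (ominus (mvsup y x) x) := by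
        rw [ominus_mvsup, ominus_mvsup]
    _ = odot (mvneg y) (odot (mvsup x y) (imp (mvsup x y) x)) := by
        rw [mvsup_comm y x, ominus_eq_odot, ominus_eq_odot (mvsup x y) y,
          ominus_eq_odot (mvsup x y) x, mvneg_odot_mvneg, odot_comm (mvsup x y) (mvneg y),
          odot_assoc]
    _ = ominus x y := by rw [odot_imp_of_le (le_mvsup_left x y), odot_comm, ominus_eq_odot]

lemma mvsup_imp_imp (x y : A) : mvsup (imp x y) (imp y x) = top := by
  show oplus (mvneg (oplus (mvneg (imp x y)) (imp y x))) (imp y x) = top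
  rw [← mvneg_mvneg (imp y x), show mvneg (imp y x) = ominus y x from rfl,
    show mvneg (imp x y) = ominus x y from rfl, oplus_comm (ominus x y),
    show mvneg (oplus (mvneg (ominus y x)) (ominus x y)) = ominus (ominus y x) (ominus x y)
      from rfl, ominus_ominus_ominus, oplus_comm]
  exact imp_self _

end Lattice

section Powers

def upow (u : A) : ℕ → A
  | 0 => top
  | n + 1 => odot (upow u n) u

lemma upow_one (u : A) : upow u 1 = u := top_odot u

lemma upow_add (u : A) (n m : ℕ) : upow u (n + m) = odot (upow u n) (upow u m) := by
  induction m with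
  | zero => exact (odot_top _).symm
  | succ m ih => rw [← Nat.add_assoc, upow, ih, odot_assoc]; rfl

lemma mvsup_odot_eq_top {u v w : A} (hu : mvsup u v = top) (hw : mvsup w v = top) :
    mvsup (odot w u) v = top := by
  have hle : mvle (odot (mvsup u v) (mvsup w v)) (mvsup (odot w u) v) := by
    refine mvle_trans (odot_mvsup_le _ _ _) (mvsup_le ?_ ?_)
    · rw [odot_comm]
      exact mvle_trans (odot_mvsup_le _ _ _) <| mvsup_le (le_mvsup_left _ _)
        (mvle_trans (odot_le_right _ _) (le_mvsup_right _ _))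
    · exact mvle_trans (odot_le_right _ _) (le_mvsup_right _ _)
  rw [hu, hw, odot_top] at hle
  exact eq_top_of_top_le hle

lemma upow_mvsup_eq_top {u v : A} (h : mvsup u v = top) (n : ℕ) : mvsup (upow u n) v = top := by
  induction n with
  | zero => exact mvsup_eq_left (mvle_top v)
  | succ n ih => exact mvsup_odot_eq_top h ih

lemma upow_mvsup_upow_eq_top {u v : A} (h : mvsup u v = top) (n m : ℕ) :
    mvsup (upow u n) (upow v m) = top := by
  refine upow_mvsup_eq_top ?_ n
  rw [mvsup_comm] at h ⊢
  exact upow_mvsup_eq_top h m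

end Powers

def principalFilter (u : A) : Set A := {x | ∃ n, mvle (upow u n) x}

lemma mem_principalFilter_self (u : A) : u ∈ principalFilter u :=
  ⟨1, by rw [upow_one]; exact mvle_refl u⟩

lemma isFilter_principalFilter (u : A) : IsFilter (principalFilter u) where
  top_mem := ⟨0, mvle_refl top⟩
  mp := by
    rintro x y ⟨n, hn⟩ ⟨m, hm⟩
    refine ⟨n + m, ?_⟩
    rw [upow_add]
    exact odot_le_iff_le_imp.mpr (mvle_trans hm (imp_le_imp_right y hn))

section Tau

variable {τ : A → A}

lemma IsSMV.map_zero (h : IsSMV τ) : τ 0 = 0 := by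
  simpa only [h.map_top, mvneg_top] using h.map_neg top

lemma IsSMV.map_map (h : IsSMV τ) (x : A) : τ (τ x) = τ x := by
  simpa only [h.map_zero, oplus_zero] using h.tau_fix x 0

lemma IsSMMV.map_imp (h : IsSMMV τ) (x y : A) : τ (imp x y) = imp (τ x) (τ y) := by
  unfold imp; rw [h.2, h.1.map_neg]

lemma IsSMMV.map_odot (h : IsSMMV τ) (x y : A) : τ (odot x y) = odot (τ x) (τ y) := by
  unfold odot; rw [h.1.map_neg, h.2, h.1.map_neg, h.1.map_neg]

lemma IsSMMV.mvle_map (h : IsSMMV τ) {x y : A} (hxy : mvle x y) : mvle (τ x) (τ y) := by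
  unfold mvle at *
  rw [← h.map_imp, hxy, h.1.map_top]

lemma IsSMMV.imp_map_mem_tauKernel (h : IsSMMV τ) (x : A) : imp x (τ x) ∈ tauKernel τ := by
  show τ _ = top
  rw [h.map_imp, h.1.map_map, imp_self]

lemma IsSMMV.map_imp_mem_tauKernel (h : IsSMMV τ) (x : A) : imp (τ x) x ∈ tauKernel τ := by
  show τ _ = top
  rw [h.map_imp, h.1.map_map, imp_self]

lemma IsSMMV.map_upow (h : IsSMMV τ) {u : A} (hu : u ∈ tauKernel τ) (n : ℕ) :
    τ (upow u n) = top := by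
  induction n with
  | zero => exact h.1.map_top
  | succ n ih => rw [upow, h.map_odot, ih, hu, odot_top]

lemma IsSMMV.isTauFilter_principalFilter (h : IsSMMV τ) {u : A} (hu : u ∈ tauKernel τ) :
    IsTauFilter τ (principalFilter u) := by
  refine ⟨isFilter_principalFilter u, ?_⟩
  rintro x ⟨n, hn⟩
  have h_top := h.mvle_map hn
  rw [h.map_upow hu n] at h_top
  exact ⟨0, h_top⟩

lemma SubdirIrrSMV.eq_top_or_eq_top (hsi : SubdirIrrSMV τ) (h : IsSMMV τ) {u v : A}
    (hu : u ∈ tauKernel τ) (hv : v ∈ tauKernel τ) (huv : mvsup u v = top) :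
    u = top ∨ v = top := by
  by_contra! hne
  obtain ⟨F, hF, hF_ne, hF_min⟩ := hsi
  obtain ⟨w, hwF, hw⟩ : ∃ w ∈ F, w ≠ top := by
    by_contra! hall
    exact hF_ne (Set.eq_singleton_iff_unique_mem.2 ⟨hF.1.top_mem, hall⟩)
  have principal_ne {x : A} (hx : x ≠ top) : principalFilter x ≠ {top} := fun he =>
    hx ((Set.eq_singleton_iff_unique_mem.1 he).2 x (mem_principalFilter_self x))
  obtain ⟨n, hn⟩ := hF_min _ (h.isTauFilter_principalFilter hu) (principal_ne hne.1) hwF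
  obtain ⟨m, hm⟩ := hF_min _ (h.isTauFilter_principalFilter hv) (principal_ne hne.2) hwF
  refine hw (eq_top_of_top_le ?_)
  rw [← upow_mvsup_upow_eq_top huv n m]
  exact mvsup_le hn hm

lemma SubdirIrrSMV.le_or_le (hsi : SubdirIrrSMV τ) (h : IsSMMV τ) (a : A) :
    mvle a (τ a) ∨ mvle (τ a) a :=
  hsi.eq_top_or_eq_top h (h.imp_map_mem_tauKernel a) (h.map_imp_mem_tauKernel a)
    (mvsup_imp_imp a (τ a))

end Tau

section Representation

def IsOdotRepr (a b c : A) : Prop := a = odot b c ∧ ∀ c' : A, a = odot b c' → mvle c' c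

def IsImpRepr (a b c : A) : Prop := a = imp c b ∧ mvlt b c ∧ mvlt c top

def IsTauRepr (τ : A → A) (a b c : A) : Prop :=
  b ∈ Set.range τ ∧ c ∈ tauKernel τ ∧ Xor (IsOdotRepr a b c) (IsImpRepr a b c)

variable {a b c : A}

lemma IsOdotRepr.le (hr : IsOdotRepr a b c) : mvle a b := hr.1 ▸ odot_le_left b c

lemma IsOdotRepr.eq_imp (hr : IsOdotRepr a b c) : c = imp b a :=
  mvle_antisymm (hr.1 ▸ le_imp_odot b c) (hr.2 _ (odot_imp_of_le hr.le).symm)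

lemma isOdotRepr_imp (h : mvle a b) : IsOdotRepr a b (imp b a) :=
  ⟨(odot_imp_of_le h).symm, fun _ hc => hc ▸ le_imp_odot b _⟩

lemma IsImpRepr.eq_imp (hr : IsImpRepr a b c) : c = imp a b := by
  rw [← mvsup_eq_left hr.2.1.1, hr.1]
  rfl

lemma IsImpRepr.not_le (hr : IsImpRepr a b c) : ¬ mvle a b := fun hab =>
  hr.2.2.2 (hr.eq_imp.trans hab)

lemma isImpRepr_imp (hba : mvle b a) (hab : ¬ mvle a b) (ha : a ≠ top) :
    IsImpRepr a b (imp a b) := by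
  have ha_eq : a = imp (imp a b) b := (mvsup_eq_left hba).symm
  refine ⟨ha_eq, ⟨le_oplus_self b (mvneg a), fun hb => ha ?_⟩, mvle_top _, hab⟩
  rw [ha_eq, ← hb, imp_self]

variable {τ : A → A}

lemma IsTauRepr.of_isOdotRepr (hb : b ∈ Set.range τ) (hc : c ∈ tauKernel τ)
    (hr : IsOdotRepr a b c) : IsTauRepr τ a b c :=
  ⟨hb, hc, Or.inl ⟨hr, fun hr' => hr'.not_le hr.le⟩⟩

lemma IsTauRepr.of_isImpRepr (hb : b ∈ Set.range τ) (hc : c ∈ tauKernel τ)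
    (hr : IsImpRepr a b c) : IsTauRepr τ a b c :=
  ⟨hb, hc, Or.inr ⟨hr, fun hr' => hr.not_le hr'.le⟩⟩

lemma IsTauRepr.eq_map (h : IsSMMV τ) (hr : IsTauRepr τ a b c) : b = τ a := by
  obtain ⟨⟨x, rfl⟩, hc, hr⟩ := hr
  have hc : τ c = top := hc
  rcases hr.or with hr | hr
  · rw [hr.1, h.map_odot, h.1.map_map, hc, odot_top]
  · rw [hr.1, h.map_imp, h.1.map_map, hc, top_imp]

lemma IsTauRepr.unique (h : IsSMMV τ) {b' c' : A} (hr : IsTauRepr τ a b c)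
    (hr' : IsTauRepr τ a b' c') : b = b' ∧ c = c' := by
  obtain rfl : b = b' := (hr.eq_map h).trans (hr'.eq_map h).symm
  refine ⟨rfl, ?_⟩
  rcases hr.2.2.or with hc | hc <;> rcases hr'.2.2.or with hc' | hc'
  · rw [hc.eq_imp, hc'.eq_imp]
  · exact absurd hc.le hc'.not_le
  · exact absurd hc'.le hc.not_le
  · rw [hc.eq_imp, hc'.eq_imp]

lemma exists_isTauRepr (h : IsSMMV τ) (ha : mvle a (τ a) ∨ mvle (τ a) a) :
    ∃ b c, IsTauRepr τ a b c := by
  by_cases hle : mvle a (τ a)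
  · exact ⟨_, _, .of_isOdotRepr ⟨a, rfl⟩ (h.map_imp_mem_tauKernel a) (isOdotRepr_imp hle)⟩
  · have ha_top : a ≠ top := by
      rintro rfl
      exact hle (by rw [h.1.map_top]; exact mvle_refl top)
    exact ⟨_, _, .of_isImpRepr ⟨a, rfl⟩ (h.imp_map_mem_tauKernel a)
      (isImpRepr_imp (ha.resolve_left hle) hle ha_top)⟩

end Representation

end MV

/-- canonical unique representation of elements of a subdirectly
irreducible SMMV-algebra: there are unique `b ∈ τ(A)`, `c ∈ F_τ(A)` with exactly
one of: (a) `a = b ⊙ c` with `c` greatest such, or (b) `a = c → b` with `b < c < 1`. -/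
theorem unique_representation {A : Type*} [MV A] (τ : A → A)
    (h : IsSMMV τ) (hsi : SubdirIrrSMV τ) (a : A) :
    ∃ b c : A, (b ∈ Set.range τ ∧ c ∈ tauKernel τ ∧
      Xor' (a = odot b c ∧ ∀ c' : A, a = odot b c' → mvle c' c)
           (a = imp c b ∧ mvlt b c ∧ mvlt c top)) ∧
      ∀ b' c' : A, (b' ∈ Set.range τ ∧ c' ∈ tauKernel τ ∧
        Xor' (a = odot b' c' ∧ ∀ c'' : A, a = odot b' c'' → mvle c'' c')
             (a = imp c' b' ∧ mvlt b' c' ∧ mvlt c' top)) →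
        b' = b ∧ c' = c := by
  obtain ⟨b, c, hr⟩ := exists_isTauRepr h (hsi.le_or_le h a)
  exact ⟨b, c, hr, fun b' c' hr' => IsTauRepr.unique h hr' hr⟩
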